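/- Let d₁ ≥ ⋯ ≥ d_p > 0 with min_{l=1,…,p−1} d_l/d_{l+1} > c for some c > 1, let λ > 0 and 1 ≤ k ≤ p with |λ/d_k − 1| < (c−1)/(2c), and set c₁ = min{ (c−1)/2, ((c−1)/c)(1 − 1/(2c)) }. Let Ω = (ω_{i,j}) be a p×p real symmetric matrix with positive diagonal entries satisfying max_{j} |ω_{j,j} − 1| ≤ c₁/2, let D = diag(d₁,…,d_p), let V = Ω − λD^{−1} with diagonal entries v_{j,j} = ω_{j,j} − λ/d_j (which are nonzero for j ≠ k), let J_k = diag(v_{1,1}^{−1},…,v_{k−1,k−1}^{−1}, 1, v_{k+1,k+1}^{−1},…,v_{p,p}^{−1}), and define φ̃(λ) = det(V J_k). If p‖Ω − I_p‖₂ ≤ c₁/8, then |φ̃(λ) − (ω_{k,k} − λ/d_k)| ≤ max{12, 8/c₁} · p · ‖Ω − I_p‖₂. -/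

import Mathlib

/-!
Scaling every column `j ≠ k` of `V` by `1 / v_jj` gives `M = V J_k`, a matrix with unit diagonal
except for `M_kk = v_kk`. The eigengap hypothesis keeps `|v_jj| ≥ c₁ / 2` for `j ≠ k`, so the
off-diagonal entries of `M` are at most `δ = ‖Ω - I‖₂ · max 1 (2 / c₁)`. In the Leibniz expansion
of `det M` the identity contributes `M_kk`, and each of the at most `p ^ m` permutations moving
`m ≥ 2` points contributes at most `δ ^ m`; hence `|det M - M_kk| ≤ ∑_{m ≥ 2} (p δ) ^ m ≤ p δ / 3`
as soon as `p δ ≤ 1 / 4`.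
-/

open Matrix

/-- Spectral norm (ℓ²-operator norm) of a real matrix. -/
noncomputable def sNorm {m n : Type*} [Fintype m] [Fintype n] [DecidableEq n]
    (A : Matrix m n ℝ) : ℝ :=
  ‖LinearMap.toContinuousLinearMap (Matrix.toEuclideanLin A)‖

open Finset

theorem abs_apply_le_sNorm {m n : Type*} [Fintype m] [Fintype n] [DecidableEq n]
    (A : Matrix m n ℝ) (i : m) (j : n) : |A i j| ≤ sNorm A := by
  set e : EuclideanSpace ℝ n := EuclideanSpace.single j 1
  calc |A i j| = ‖toEuclideanLin A e i‖ := by simp [e, toLpLin_apply, mulVec_single]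
    _ ≤ ‖toEuclideanLin A e‖ := PiLp.norm_apply_le _ i
    _ ≤ sNorm A * ‖e‖ := (LinearMap.toContinuousLinearMap (toEuclideanLin A)).le_opNorm e
    _ = sNorm A := by simp [e]

theorem abs_sub_diagonal_apply_le_sNorm {n : Type*} [Fintype n] [DecidableEq n]
    (A : Matrix n n ℝ) (w : n → ℝ) {i j : n} (hij : i ≠ j) :
    |(A - diagonal w) i j| ≤ sNorm (A - 1) := by
  have h := abs_apply_le_sNorm (A - 1) i j
  rwa [Matrix.sub_apply, one_apply_ne hij, ← diagonal_apply_ne w hij, ← Matrix.sub_apply] at h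

theorem sum_Icc_two_pow_le {x : ℝ} (hx₀ : 0 ≤ x) (hx : x ≤ 1 / 4) (n : ℕ) :
    ∑ m ∈ Icc 2 n, x ^ m ≤ x / 3 := by
  calc ∑ m ∈ Icc 2 n, x ^ m = ∑ m ∈ Ico 2 (n + 1), x ^ m := by rw [Ico_add_one_right_eq_Icc]
    _ ≤ x ^ 2 / (1 - x) := geom_sum_Ico_le_of_lt_one hx₀ (by linarith)
    _ ≤ x / 3 := by rw [div_le_div_iff₀ (by linarith) (by norm_num)]; nlinarith

section Permutations
variable {α : Type*} [Fintype α] [DecidableEq α]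

theorem Equiv.Perm.card_filter_support_eq_le (S : Finset α) :
    #{σ : Equiv.Perm α | σ.support = S} ≤ S.card.factorial := by
  calc #{σ : Equiv.Perm α | σ.support = S}
      ≤ Fintype.card {σ : Equiv.Perm α // ∀ a, a ∉ S → σ a = a} := by
        rw [Fintype.card_subtype]
        refine card_le_card fun σ hσ => ?_
        simp only [mem_filter, mem_univ, true_and] at hσ ⊢
        exact fun a ha => Equiv.Perm.notMem_support.mp (hσ ▸ ha)
    _ = S.card.factorial := by
        rw [← Fintype.card_coe S, ← Fintype.card_perm]
        exact Fintype.card_congr (Equiv.Perm.subtypeEquivSubtypePerm (· ∈ S)).symm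

theorem Equiv.Perm.card_filter_card_support_eq_le (m : ℕ) :
    #{σ : Equiv.Perm α | σ.support.card = m} ≤ Fintype.card α ^ m := by
  calc #{σ : Equiv.Perm α | σ.support.card = m}
      ≤ #((powersetCard m univ).biUnion fun S => {σ : Equiv.Perm α | σ.support = S}) := by
        refine card_le_card fun σ hσ => ?_
        simp only [mem_filter, mem_univ, true_and] at hσ
        simp [mem_biUnion, mem_powersetCard, hσ]
    _ ≤ ∑ S ∈ powersetCard m univ, #{σ : Equiv.Perm α | σ.support = S} := card_biUnion_le
    _ ≤ ∑ S ∈ powersetCard m (univ : Finset α), m.factorial :=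
        sum_le_sum fun S hS => (mem_powersetCard.mp hS).2 ▸ card_filter_support_eq_le S
    _ = (Fintype.card α).descFactorial m := by
        simp [Nat.descFactorial_eq_factorial_mul_choose, mul_comm]
    _ ≤ Fintype.card α ^ m := Nat.descFactorial_le_pow _ _

theorem Equiv.Perm.sum_ne_one_pow_card_support_le {δ : ℝ} (hδ : 0 ≤ δ) :
    ∑ σ ∈ univ.erase (1 : Equiv.Perm α), δ ^ σ.support.card
      ≤ ∑ m ∈ Icc 2 (Fintype.card α), (Fintype.card α * δ) ^ m := by
  have hmaps : ∀ σ ∈ univ.erase (1 : Equiv.Perm α),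
      σ.support.card ∈ Icc 2 (Fintype.card α) := fun σ hσ =>
    mem_Icc.mpr ⟨two_le_card_support_of_ne_one (ne_of_mem_erase hσ), card_le_univ _⟩
  rw [← sum_fiberwise_of_maps_to hmaps]
  refine sum_le_sum fun m _ => ?_
  calc ∑ σ ∈ univ.erase (1 : Equiv.Perm α) with σ.support.card = m, δ ^ σ.support.card
      = #{σ ∈ univ.erase (1 : Equiv.Perm α) | σ.support.card = m} * δ ^ m := by
        rw [sum_congr rfl fun σ hσ => by rw [(mem_filter.mp hσ).2], sum_const, nsmul_eq_mul]
    _ ≤ (Fintype.card α ^ m : ℕ) * δ ^ m := by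
        gcongr
        refine (card_le_card fun σ hσ => ?_).trans (card_filter_card_support_eq_le m)
        simp only [mem_filter, mem_univ, true_and] at hσ ⊢
        exact hσ.2
    _ = (Fintype.card α * δ) ^ m := by push_cast; ring

end Permutations

section Determinant
variable {n : Type*} [Fintype n] [DecidableEq n]

theorem Matrix.det_sub_prod_diag (M : Matrix n n ℝ) :
    M.det - ∏ i, M i i =
      ∑ σ ∈ univ.erase (1 : Equiv.Perm n), Equiv.Perm.sign σ • ∏ i, M (σ i) i := by
  rw [det_apply, ← add_sum_erase _ _ (mem_univ 1)]
  simp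

theorem Matrix.abs_prod_perm_le {M : Matrix n n ℝ} {δ : ℝ} (hdiag : ∀ i, |M i i| ≤ 1)
    (hoff : ∀ i j, i ≠ j → |M i j| ≤ δ) (σ : Equiv.Perm n) :
    |∏ i, M (σ i) i| ≤ δ ^ σ.support.card := by
  calc |∏ i, M (σ i) i| = ∏ i, |M (σ i) i| := abs_prod _ _
    _ ≤ ∏ i, if i ∈ σ.support then δ else 1 := by
        refine prod_le_prod (fun _ _ => abs_nonneg _) fun i _ => ?_
        split_ifs with h
        · exact hoff _ _ (Equiv.Perm.mem_support.mp h)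
        · rw [Equiv.Perm.notMem_support.mp h]
          exact hdiag i
    _ = δ ^ σ.support.card := by rw [prod_ite_mem, univ_inter, prod_const]

theorem Matrix.abs_det_sub_prod_diag_le {M : Matrix n n ℝ} {δ : ℝ} (hδ : 0 ≤ δ)
    (hdiag : ∀ i, |M i i| ≤ 1) (hoff : ∀ i j, i ≠ j → |M i j| ≤ δ)
    (hsmall : Fintype.card n * δ ≤ 1 / 4) :
    |M.det - ∏ i, M i i| ≤ Fintype.card n * δ / 3 := by
  rw [det_sub_prod_diag]
  calc |∑ σ ∈ univ.erase (1 : Equiv.Perm n), Equiv.Perm.sign σ • ∏ i, M (σ i) i|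
      ≤ ∑ σ ∈ univ.erase (1 : Equiv.Perm n), |∏ i, M (σ i) i| := by
        refine (abs_sum_le_sum_abs _ _).trans_eq (sum_congr rfl fun σ _ => ?_)
        rw [Units.smul_def, zsmul_eq_mul, abs_mul, abs_unit_intCast, one_mul]
    _ ≤ ∑ σ ∈ univ.erase (1 : Equiv.Perm n), δ ^ σ.support.card :=
        sum_le_sum fun σ _ => abs_prod_perm_le hdiag hoff σ
    _ ≤ ∑ m ∈ Icc 2 (Fintype.card n), (Fintype.card n * δ) ^ m :=
        Equiv.Perm.sum_ne_one_pow_card_support_le hδ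
    _ ≤ Fintype.card n * δ / 3 := sum_Icc_two_pow_le (by positivity) hsmall _

end Determinant

section DiagonalNormalization
variable {n : Type*} [Fintype n] [DecidableEq n] (A : Matrix n n ℝ) (k : n)

noncomputable def Matrix.normalizeDiagExcept : Matrix n n ℝ :=
  A * diagonal fun j => if j = k then 1 else (A j j)⁻¹

theorem Matrix.normalizeDiagExcept_apply (i j : n) :
    A.normalizeDiagExcept k i j = A i j * if j = k then 1 else (A j j)⁻¹ :=
  mul_diagonal _ _ _ _

variable {A k}

theorem Matrix.normalizeDiagExcept_apply_self_of_ne {j : n} (hj : j ≠ k) (hA : A j j ≠ 0) :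
    A.normalizeDiagExcept k j j = 1 := by
  rw [normalizeDiagExcept_apply, if_neg hj, mul_inv_cancel₀ hA]

theorem Matrix.prod_diag_normalizeDiagExcept (hA : ∀ j, j ≠ k → A j j ≠ 0) :
    ∏ i, A.normalizeDiagExcept k i i = A k k := by
  rw [prod_eq_single k (fun j _ hj => normalizeDiagExcept_apply_self_of_ne hj (hA j hj))
    (absurd (mem_univ k)), normalizeDiagExcept_apply, if_pos rfl, mul_one]

theorem Matrix.abs_normalizeDiagExcept_apply_self_le (hk : |A k k| ≤ 1)
    (hA : ∀ j, j ≠ k → A j j ≠ 0) (j : n) : |A.normalizeDiagExcept k j j| ≤ 1 := by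
  by_cases hj : j = k
  · rwa [hj, normalizeDiagExcept_apply, if_pos rfl, mul_one]
  · rw [normalizeDiagExcept_apply_self_of_ne hj (hA j hj), abs_one]

theorem Matrix.abs_normalizeDiagExcept_apply_le {s : ℝ} (hs : 0 < s)
    (hA : ∀ j, j ≠ k → s ≤ |A j j|) (i j : n) :
    |A.normalizeDiagExcept k i j| ≤ |A i j| * max 1 s⁻¹ := by
  rw [normalizeDiagExcept_apply, abs_mul]
  gcongr
  split_ifs with hj
  · simp
  · rw [abs_inv]
    exact (inv_anti₀ hs (hA j hj)).trans (le_max_right _ _)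

theorem Matrix.abs_det_normalizeDiagExcept_sub_le {s ε : ℝ} (hs : 0 < s) (hε : 0 ≤ ε)
    (hk : |A k k| ≤ 1) (hA : ∀ j, j ≠ k → s ≤ |A j j|) (hoff : ∀ i j, i ≠ j → |A i j| ≤ ε)
    (hsmall : Fintype.card n * (ε * max 1 s⁻¹) ≤ 1 / 4) :
    |(A.normalizeDiagExcept k).det - A k k| ≤ Fintype.card n * (ε * max 1 s⁻¹) / 3 := by
  have hA₀ (j : n) (hj : j ≠ k) : A j j ≠ 0 := abs_pos.mp (hs.trans_le (hA j hj))
  rw [← prod_diag_normalizeDiagExcept hA₀]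
  refine abs_det_sub_prod_diag_le (by positivity)
    (abs_normalizeDiagExcept_apply_self_le hk hA₀) (fun i j hij => ?_) hsmall
  exact (abs_normalizeDiagExcept_apply_le hs hA i j).trans
    (mul_le_mul_of_nonneg_right (hoff i j hij) (by positivity))

end DiagonalNormalization

noncomputable def eigengapConst (c : ℝ) : ℝ :=
  min ((c - 1) / 2) ((c - 1) / c * (1 - 1 / (2 * c)))

section Eigengap
variable {c : ℝ}

theorem eigengapConst_pos (hc : 1 < c) : 0 < eigengapConst c := by
  have : 1 / (2 * c) < 1 := by rw [div_lt_one] <;> linarith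
  unfold eigengapConst
  apply lt_min <;> apply_rules [div_pos, mul_pos] <;> linarith

theorem eigengapConst_lt_one (hc : 1 < c) : eigengapConst c < 1 := by
  have h₁ : (c - 1) / c < 1 := by rw [div_lt_one] <;> linarith
  have h₂ : 0 < 1 / (2 * c) := by positivity
  calc eigengapConst c ≤ (c - 1) / c * (1 - 1 / (2 * c)) := min_le_right _ _
    _ < 1 := by nlinarith [div_pos (by linarith : (0 : ℝ) < c - 1) (by linarith : (0 : ℝ) < c)]

theorem eigengapConst_le_abs_sub_one {x y : ℝ} (hc : 1 < c) (hx : |x - 1| < (c - 1) / (2 * c))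
    (hy : y ≤ x / c ∨ c * x ≤ y) : eigengapConst c ≤ |y - 1| := by
  have hc₀ : 0 < c := by linarith
  obtain ⟨hx₁, hx₂⟩ := abs_lt.mp hx
  rcases hy with hy | hy
  · calc eigengapConst c ≤ (c - 1) / c * (1 - 1 / (2 * c)) := min_le_right _ _
      _ = 1 - (1 + (c - 1) / (2 * c)) / c := by field_simp; ring
      _ ≤ 1 - x / c := by gcongr; linarith
      _ ≤ 1 - y := by linarith
      _ ≤ |y - 1| := by rw [abs_sub_comm]; exact le_abs_self _
  · calc eigengapConst c ≤ (c - 1) / 2 := min_le_left _ _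
      _ = c * (1 - (c - 1) / (2 * c)) - 1 := by field_simp; ring
      _ ≤ c * x - 1 := by gcongr; linarith
      _ ≤ y - 1 := by linarith
      _ ≤ |y - 1| := le_abs_self _

end Eigengap

section SeparatedSequence
variable {p : ℕ} {d : Fin p → ℝ} {c : ℝ}

theorem mul_le_of_lt_of_gap (hpos : ∀ i, 0 < d i) (hmono : Antitone d) (hc : 0 ≤ c)
    (hgap : ∀ l : ℕ, (h : l + 1 < p) → c < d ⟨l, Nat.lt_of_succ_lt h⟩ / d ⟨l + 1, h⟩)
    {i j : Fin p} (hij : i < j) : c * d j ≤ d i := by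
  have hi : (i : ℕ) + 1 < p := by omega
  have hnext : c * d ⟨i + 1, hi⟩ < d i := (lt_div_iff₀ (hpos _)).mp (hgap i hi)
  have hj : d j ≤ d ⟨i + 1, hi⟩ := hmono (Fin.mk_le_of_le_val hij)
  nlinarith

theorem div_le_div_div_or_mul_div_le {lam : ℝ} (hlam : 0 ≤ lam) (hpos : ∀ i, 0 < d i)
    (hmono : Antitone d) (hc : 0 < c)
    (hgap : ∀ l : ℕ, (h : l + 1 < p) → c < d ⟨l, Nat.lt_of_succ_lt h⟩ / d ⟨l + 1, h⟩)
    {j k : Fin p} (hjk : j ≠ k) : lam / d j ≤ lam / d k / c ∨ c * (lam / d k) ≤ lam / d j := by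
  rcases hjk.lt_or_gt with h | h
  · left
    rw [div_div, mul_comm]
    exact div_le_div_of_nonneg_left hlam (by have := hpos k; positivity)
      (mul_le_of_lt_of_gap hpos hmono hc.le hgap h)
  · right
    rw [mul_div_assoc', div_le_div_iff₀ (hpos k) (hpos j)]
    have := mul_le_of_lt_of_gap hpos hmono hc.le hgap h
    nlinarith

end SeparatedSequence

/-- Appendix Lemma A.3 (determinant perturbation bound for the rescaled characteristic
polynomial). Indices are 0-based. -/
theorem statement8 {p : ℕ} (d : Fin p → ℝ) (hpos : ∀ i, 0 < d i) (hmono : Antitone d)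
    (c : ℝ) (hc : 1 < c)
    (hgap : ∀ l : ℕ, (h : l + 1 < p) → c < d ⟨l, by omega⟩ / d ⟨l + 1, h⟩)
    (lam : ℝ) (hlam : 0 < lam) (k : Fin p)
    (hk : |lam / d k - 1| < (c - 1) / (2 * c))
    (c₁ : ℝ) (hc₁ : c₁ = min ((c - 1) / 2) ((c - 1) / c * (1 - 1 / (2 * c))))
    (Omg : Matrix (Fin p) (Fin p) ℝ) (hdiag : ∀ j, |Omg j j - 1| ≤ c₁ / 2)
    (V : Matrix (Fin p) (Fin p) ℝ)
    (hV : V = Omg - Matrix.diagonal fun j => lam * (d j)⁻¹)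
    (Jk : Matrix (Fin p) (Fin p) ℝ)
    (hJk : Jk = Matrix.diagonal fun j => if j = k then (1 : ℝ) else (Omg j j - lam / d j)⁻¹)
    (hsmall : (p : ℝ) * sNorm (Omg - 1) ≤ c₁ / 8) :
    |(V * Jk).det - (Omg k k - lam / d k)| ≤ max 12 (8 / c₁) * p * sNorm (Omg - 1) := by
  change c₁ = eigengapConst c at hc₁
  have hc₁pos : 0 < c₁ := hc₁ ▸ eigengapConst_pos hc
  have hc₁lt : c₁ < 1 := hc₁ ▸ eigengapConst_lt_one hc
  set ε := sNorm (Omg - 1)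
  have hε : 0 ≤ ε := norm_nonneg _
  have hVdiag (j : Fin p) : V j j = Omg j j - lam / d j := by simp [hV, div_eq_mul_inv]
  have hVk : |V k k| ≤ 1 := by
    have : (c - 1) / (2 * c) < 1 / 2 := by rw [div_lt_div_iff₀] <;> linarith
    rw [hVdiag]
    linarith [abs_sub_le (Omg k k) 1 (lam / d k), abs_sub_comm 1 (lam / d k), hdiag k]
  have hVbig (j : Fin p) (hj : j ≠ k) : c₁ / 2 ≤ |V j j| := by
    have := hc₁ ▸ eigengapConst_le_abs_sub_one hc hk
      (div_le_div_div_or_mul_div_le hlam.le hpos hmono (by linarith) hgap hj)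
    rw [hVdiag]
    linarith [abs_sub_le (lam / d j) (Omg j j) 1, abs_sub_comm (lam / d j) (Omg j j), hdiag j]
  have hδ : (p : ℝ) * (ε * max 1 (c₁ / 2)⁻¹) ≤ 1 / 4 := by
    rw [← mul_assoc, mul_max_of_nonneg _ _ (by positivity)]
    refine max_le (by linarith) ?_
    calc p * ε * (c₁ / 2)⁻¹ ≤ c₁ / 8 * (c₁ / 2)⁻¹ := by gcongr
      _ = 1 / 4 := by field_simp; norm_num
  have hM : V * Jk = V.normalizeDiagExcept k := by simp_rw [hJk, normalizeDiagExcept, hVdiag]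
  rw [hM, ← hVdiag]
  calc _ ≤ p * (ε * max 1 (c₁ / 2)⁻¹) / 3 := by
        simpa using abs_det_normalizeDiagExcept_sub_le (half_pos hc₁pos) hε hVk hVbig
          (fun i j hij => hV ▸ abs_sub_diagonal_apply_le_sNorm Omg _ hij) (by simpa using hδ)
    _ = max 1 (c₁ / 2)⁻¹ / 3 * (p * ε) := by ring
    _ ≤ max 12 (8 / c₁) * (p * ε) := by
        gcongr ?_ * _
        refine (div_le_self (by positivity) (by norm_num)).trans (max_le_max (by norm_num) ?_)
        rw [inv_div]; gcongr; norm_num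
    _ = max 12 (8 / c₁) * p * ε := by ring
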